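/- arXiv:2311.10053 — 6 statements merged into one kernel-verified Lean document; each statement's English description precedes it below -/
import Mathlib

section
/- Let E : [t₀, ∞) → ℝ be a continuously differentiable nonnegative function whose derivative is nonpositive (E is non-increasing), and let α ≥ 0. If ∫_{t₀}^{∞} t^α E(t) dt < ∞, then lim_{t→∞} t^{α+1} E(t) = 0. -/
/-! A non-increasing nonnegative `E` satisfies `s ^ α * E s ≥ (t / 2) ^ α * E t` on `[t / 2, t]`,
so `t ^ (α + 1) * E t ≤ 2 ^ (α + 1) * ∫_{t/2}^{t} s ^ α * E s`, and the right-hand side is a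
tail of a convergent integral. -/

open Set MeasureTheory Filter Topology

theorem tendsto_intervalIntegral_of_integrableOn_Ioi {ι F : Type*} [NormedAddCommGroup F]
    [NormedSpace ℝ F] {l : Filter ι} [l.IsCountablyGenerated] {f : ℝ → F} {a : ℝ}
    (hf : IntegrableOn f (Ioi a)) {u v : ι → ℝ} (hu : Tendsto u l atTop) (hv : Tendsto v l atTop) :
    Tendsto (fun i => ∫ x in u i..v i, f x) l (𝓝 0) := by
  have hint : ∀ b, a ≤ b → IntervalIntegrable f volume a b := fun b hb =>
    (intervalIntegrable_iff_integrableOn_Ioc_of_le hb).2 (hf.mono_set Ioc_subset_Ioi_self)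
  have hdiff := (intervalIntegral_tendsto_integral_Ioi a hf hv).sub
    (intervalIntegral_tendsto_integral_Ioi a hf hu)
  rw [sub_self] at hdiff
  refine hdiff.congr' ?_
  filter_upwards [hu.eventually_ge_atTop a, hv.eventually_ge_atTop a] with i hui hvi
  exact intervalIntegral.integral_interval_sub_left (hint _ hvi) (hint _ hui)

theorem mul_rpow_mul_le_intervalIntegral_of_antitoneOn {E : ℝ → ℝ} {α u t : ℝ} (hα : 0 ≤ α)
    (hu : 0 ≤ u) (hut : u ≤ t) (hanti : AntitoneOn E (Icc u t)) (hEt : 0 ≤ E t)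
    (hint : IntervalIntegrable (fun s => s ^ α * E s) volume u t) :
    (t - u) * (u ^ α * E t) ≤ ∫ s in u..t, s ^ α * E s := by
  rw [← smul_eq_mul, ← intervalIntegral.integral_const]
  refine intervalIntegral.integral_mono_on hut intervalIntegrable_const hint fun s hs => ?_
  calc u ^ α * E t ≤ s ^ α * E t := by gcongr; exact hs.1
    _ ≤ s ^ α * E s :=
      mul_le_mul_of_nonneg_left (hanti hs ⟨hut, le_rfl⟩ hs.2) (Real.rpow_nonneg (hu.trans hs.1) α)

theorem stmt_2_general (t₀ : ℝ) (E E' : ℝ → ℝ) (α : ℝ) (hα : 0 ≤ α)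
    (hderiv : ∀ t ∈ Ici t₀, HasDerivAt E (E' t) t)
    (hnonneg : ∀ t ∈ Ici t₀, 0 ≤ E t)
    (hE'nonpos : ∀ t ∈ Ici t₀, E' t ≤ 0)
    (hint : IntegrableOn (fun t => t ^ α * E t) (Ici t₀)) :
    Tendsto (fun t => t ^ (α + 1) * E t) atTop (nhds 0) := by
  have hanti : AntitoneOn E (Ici t₀) := by
    refine antitoneOn_of_hasDerivWithinAt_nonpos (convex_Ici t₀)
      (fun t ht => (hderiv t ht).continuousAt.continuousWithinAt) (f' := E') ?_ ?_
    · rw [interior_Ici]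
      exact fun t ht => (hderiv t (mem_Ici_of_Ioi ht)).hasDerivWithinAt
    · rw [interior_Ici]
      exact fun t ht => hE'nonpos t (mem_Ici_of_Ioi ht)
  have htail : Tendsto (fun t => 2 ^ (α + 1) * ∫ s in t / 2..t, s ^ α * E s) atTop (𝓝 0) := by
    simpa using (tendsto_intervalIntegral_of_integrableOn_Ioi (hint.mono_set Ioi_subset_Ici_self)
      (tendsto_id.atTop_div_const two_pos) tendsto_id).const_mul (2 ^ (α + 1))
  refine tendsto_of_tendsto_of_tendsto_of_le_of_le' tendsto_const_nhds htail ?_ ?_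
  · filter_upwards [eventually_ge_atTop t₀, eventually_ge_atTop 0] with t ht ht0
    exact mul_nonneg (Real.rpow_nonneg ht0 _) (hnonneg t ht)
  · filter_upwards [eventually_ge_atTop (2 * t₀), eventually_ge_atTop 0] with t ht ht0
    have hhalf : t₀ ≤ t / 2 := by linarith
    calc t ^ (α + 1) * E t = 2 ^ (α + 1) * ((t - t / 2) * ((t / 2) ^ α * E t)) := by
          have hpow : t ^ (α + 1) = 2 ^ (α + 1) * ((t / 2) ^ α * (t / 2)) := by
            rw [← Real.rpow_add_one' (by positivity) (by positivity),
              ← Real.mul_rpow zero_le_two (by positivity), mul_div_cancel₀ t two_ne_zero]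
          rw [sub_half, hpow]
          ring
      _ ≤ 2 ^ (α + 1) * ∫ s in t / 2..t, s ^ α * E s := by
          gcongr
          refine mul_rpow_mul_le_intervalIntegral_of_antitoneOn hα (by positivity) (by linarith)
            (hanti.mono fun s hs => hhalf.trans hs.1)
            (hnonneg t (hhalf.trans (half_le_self ht0))) ?_
          exact (intervalIntegrable_iff_integrableOn_Ioc_of_le (by linarith)).2
            (hint.mono_set fun s hs => hhalf.trans hs.1.le)

theorem stmt_2 (t₀ : ℝ) (ht₀ : 0 < t₀) (E E' : ℝ → ℝ) (α : ℝ) (hα : 0 ≤ α)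
    (hderiv : ∀ t ∈ Ici t₀, HasDerivAt E (E' t) t)
    (hE'cont : ContinuousOn E' (Ici t₀))
    (hnonneg : ∀ t ∈ Ici t₀, 0 ≤ E t)
    (hE'nonpos : ∀ t ∈ Ici t₀, E' t ≤ 0)
    (hint : IntegrableOn (fun t => t ^ α * E t) (Ici t₀)) :
    Tendsto (fun t => t ^ (α + 1) * E t) atTop (nhds 0) :=
  stmt_2_general t₀ E E' α hα hderiv hnonneg hE'nonpos hint
end

section
/- In the setting of the Lyapunov-damped system (LD) with f convex and attaining its minimum, if the solution x is bounded on [t₀, ∞), then ∫_{t₀}^{∞} E(t) dt < ∞, and consequently E(t) → 0 as t → ∞; in particular f(x(t)) → f* and ‖ẋ(t)‖ → 0. -/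
open Set Filter MeasureTheory

open scoped RealInnerProductSpace Topology

/-!
Along the flow `E' = -√E ‖ẋ‖² ≤ 0` and `(√E)' = -‖ẋ‖² / 2`. With a minimiser `z` as anchor, the
Lyapunov function `V = ⟪ẋ, x - z⟫ + √E (‖x - z‖² / 2 + 3)` satisfies `V' ≤ -E`: the damping terms
cancel, convexity gives `⟪∇f(x), x - z⟫ ≥ f(x) - f(z)`, and the summand `3√E` absorbs the kinetic
terms. Since `x` is bounded and `‖ẋ‖ ≤ √(2E(t₀))`, `V` is bounded below, so `∫ E < ∞`; a
nonincreasing integrable `E ≥ 0` tends to `0`, and `f(x) - f*` and `‖ẋ‖² / 2` are bounded by `E`.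
Where `E` vanishes it stays `0`, so `√E` is still right-differentiable there, which suffices for the
one-sided fundamental theorem of calculus.
-/

section Gradient

variable {H : Type*} [NormedAddCommGroup H] [InnerProductSpace ℝ H] [CompleteSpace H]
  {f : H → ℝ} {g : H}

theorem HasGradientAt.comp_hasDerivAt {c : ℝ → H} {c' : H} {t : ℝ}
    (hf : HasGradientAt f g (c t)) (hc : HasDerivAt c c' t) :
    HasDerivAt (fun s => f (c s)) ⟪g, c'⟫ t := by
  have := hf.hasFDerivAt.comp_hasDerivAt t hc
  simp only [InnerProductSpace.toDual_apply_apply] at this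
  exact this

theorem ConvexOn.add_inner_le_of_hasGradientAt (hconv : ConvexOn ℝ univ f) {a : H}
    (hg : HasGradientAt f g a) (b : H) : f a + ⟪g, b - a⟫ ≤ f b := by
  set ℓ : ℝ →ᵃ[ℝ] H := AffineMap.lineMap a b
  have hline : ConvexOn ℝ univ (f ∘ ℓ) := hconv.comp_affineMap ℓ
  have hderiv : HasDerivAt (f ∘ ℓ) ⟪g, b - a⟫ 0 :=
    HasGradientAt.comp_hasDerivAt (by simpa [ℓ] using hg) AffineMap.hasDerivAt_lineMap
  have := hline.le_slope_of_hasDerivAt (mem_univ 0) (mem_univ 1) zero_lt_one hderiv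
  simp only [slope_def_field, Function.comp_apply, AffineMap.lineMap_apply_one,
    AffineMap.lineMap_apply_zero, sub_zero, div_one, ℓ] at this
  linarith

end Gradient

theorem hasDerivWithinAt_sqrt_of_antitoneOn {E v : ℝ → ℝ} {a t : ℝ} (hE0 : ∀ s, 0 ≤ E s)
    (hanti : AntitoneOn E (Ici a)) (hv : E t = 0 → v t = 0)
    (hE : HasDerivAt E (-(√(E t) * v t)) t) (ht : a ≤ t) :
    HasDerivWithinAt (fun s => √(E s)) (-(v t / 2)) (Ici t) t := by
  rcases (hE0 t).lt_or_eq with hpos | hzero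
  · refine ((Real.hasDerivAt_sqrt hpos.ne').comp t hE).hasDerivWithinAt.congr_deriv ?_
    field_simp
  · have hvanish : ∀ s ∈ Ici t, √(E s) = 0 := fun s hs => by
      rw [Real.sqrt_eq_zero', hzero]
      exact hanti ht (ht.trans hs) hs
    rw [hv hzero.symm, zero_div, neg_zero]
    exact (hasDerivWithinAt_const t _ 0).congr hvanish (hvanish t self_mem_Ici)

theorem antitoneOn_Ici_of_hasDerivAt_nonpos {g g' : ℝ → ℝ} {a : ℝ}
    (hg : ∀ t ≥ a, HasDerivAt g (g' t) t) (hg' : ∀ t ≥ a, g' t ≤ 0) : AntitoneOn g (Ici a) :=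
  antitoneOn_of_hasDerivWithinAt_nonpos (convex_Ici a)
    (fun t ht => (hg t ht).continuousAt.continuousWithinAt)
    (fun t ht => (hg t (interior_subset ht)).hasDerivWithinAt)
    fun t ht => hg' t (interior_subset ht)

theorem integrableOn_Ici_of_intervalIntegral_le {E : ℝ → ℝ} {a K : ℝ} (hE0 : ∀ s, 0 ≤ E s)
    (hanti : AntitoneOn E (Ici a)) (hK : ∀ T ≥ a, ∫ s in a..T, E s ≤ K) :
    IntegrableOn E (Ici a) := by
  rw [integrableOn_Ici_iff_integrableOn_Ioi]
  refine integrableOn_Ioi_of_intervalIntegral_norm_bounded K a (fun T => ?_) tendsto_id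
    (eventually_ge_atTop a |>.mono fun T hT => ?_)
  · exact ((hanti.mono Icc_subset_Ici_self).integrableOn_isCompact isCompact_Icc).mono_set
      Ioc_subset_Icc_self
  · simpa only [id, Real.norm_of_nonneg (hE0 _)] using hK T hT

theorem AntitoneOn.tendsto_zero_of_intervalIntegral_le {E : ℝ → ℝ} {a K : ℝ}
    (hanti : AntitoneOn E (Ici a)) (hE0 : ∀ s, 0 ≤ E s) (hK : ∀ T ≥ a, ∫ s in a..T, E s ≤ K) :
    Tendsto E atTop (𝓝 0) := by
  have hbound : ∀ T > a, E T ≤ K / (T - a) := fun T hT => by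
    rw [le_div_iff₀ (sub_pos.mpr hT)]
    calc E T * (T - a) = ∫ _ in a..T, E T := by simp [mul_comm]
      _ ≤ ∫ s in a..T, E s := by
        refine intervalIntegral.integral_mono_on hT.le intervalIntegrable_const ?_ fun s hs =>
          hanti hs.1 hT.le hs.2
        exact (hanti.mono (by simp [uIcc_of_le hT.le, Icc_subset_Ici_self])).intervalIntegrable
      _ ≤ K := hK T hT.le
  have hlim : Tendsto (fun T => K / (T - a)) atTop (𝓝 0) :=
    tendsto_const_nhds.div_atTop (tendsto_atTop_add_const_right _ _ tendsto_id)
  exact tendsto_of_tendsto_of_tendsto_of_le_of_le' tendsto_const_nhds hlim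
    (Eventually.of_forall hE0) ((eventually_gt_atTop a).mono hbound)

section DampedSystem

variable {H : Type*} [NormedAddCommGroup H] [InnerProductSpace ℝ H]
  {f : H → ℝ} {f' : H → H} {x x' x'' : ℝ → H} {E : ℝ → ℝ} {fstar t : ℝ}

variable (x x' E) in
noncomputable def anchorLyapunov (z : H) (t : ℝ) : ℝ :=
  ⟪x' t, x t - z⟫ + √(E t) * (‖x t - z‖ ^ 2 / 2 + 3)

theorem neg_anchorLyapunov_le (z : H) {A M : ℝ} (hA : ‖x' t‖ ≤ A) (hM : ‖x t‖ ≤ M) :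
    -anchorLyapunov x x' E z t ≤ A * (M + ‖z‖) := by
  have hp := neg_le_of_abs_le (abs_real_inner_le_norm (x' t) (x t - z))
  have hpot : 0 ≤ √(E t) * (‖x t - z‖ ^ 2 / 2 + 3) := by positivity
  have hdist : ‖x t - z‖ ≤ M + ‖z‖ := (norm_sub_le _ _).trans (by linarith)
  have := mul_le_mul hA hdist (norm_nonneg _) ((norm_nonneg _).trans hA)
  unfold anchorLyapunov
  linarith

theorem hasDerivWithinAt_anchorLyapunov (z : H) (hx : HasDerivAt x (x' t) t)
    (hx' : HasDerivAt x' (x'' t) t)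
    (hG : HasDerivWithinAt (fun s => √(E s)) (-(‖x' t‖ ^ 2 / 2)) (Ici t) t)
    (hODE : x'' t + √(E t) • x' t + f' (x t) = 0) :
    HasDerivWithinAt (anchorLyapunov x x' E z)
      (-⟪f' (x t), x t - z⟫ - ‖x' t‖ ^ 2 / 2 - ‖x' t‖ ^ 2 * ‖x t - z‖ ^ 2 / 4) (Ici t) t := by
  have hxz : HasDerivAt (fun s => x s - z) (x' t) t := hx.sub_const z
  have hd : HasDerivWithinAt (anchorLyapunov x x' E z) _ (Ici t) t :=
    (hx'.inner ℝ hxz).hasDerivWithinAt.add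
      (hG.mul ((hxz.norm_sq.div_const 2).add_const 3).hasDerivWithinAt)
  refine hd.congr_deriv ?_
  have hacc : x'' t = -(√(E t) • x' t) - f' (x t) := by
    linear_combination (norm := module) hODE
  rw [hacc, inner_sub_left, inner_neg_left, real_inner_smul_left, real_inner_self_eq_norm_sq,
    real_inner_comm (x' t)]
  ring

variable [CompleteSpace H]

theorem hasDerivAt_energy (hf : ∀ y, HasGradientAt f (f' y) y) (hx : HasDerivAt x (x' t) t)
    (hx' : HasDerivAt x' (x'' t) t) (hE : ∀ s, E s = f (x s) - fstar + ‖x' s‖ ^ 2 / 2)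
    (hODE : x'' t + √(E t) • x' t + f' (x t) = 0) :
    HasDerivAt E (-(√(E t) * ‖x' t‖ ^ 2)) t := by
  have hd : HasDerivAt (fun s => f (x s) - fstar + ‖x' s‖ ^ 2 / 2)
      (⟪f' (x t), x' t⟫ + 2 * ⟪x' t, x'' t⟫ / 2) t :=
    (((hf (x t)).comp_hasDerivAt hx).sub_const fstar).add (hx'.norm_sq.div_const 2)
  convert hd using 1
  · exact funext hE
  · have hacc : x'' t = -(√(E t) • x' t) - f' (x t) := by
      linear_combination (norm := module) hODE
    rw [hacc, inner_sub_right, inner_neg_right, real_inner_smul_right, real_inner_self_eq_norm_sq,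
      real_inner_comm]
    ring

theorem integral_energy_le_anchorLyapunov {z : H} {t₀ T : ℝ}
    (hf : ∀ y, HasGradientAt f (f' y) y) (hconv : ConvexOn ℝ univ f)
    (hx : ∀ t, HasDerivAt x (x' t) t) (hx' : ∀ t, HasDerivAt x' (x'' t) t)
    (hE : ∀ t, E t = f (x t) - f z + ‖x' t‖ ^ 2 / 2)
    (hODE : ∀ t ≥ t₀, x'' t + √(E t) • x' t + f' (x t) = 0)
    (hG : ∀ t ≥ t₀, HasDerivWithinAt (fun s => √(E s)) (-(‖x' t‖ ^ 2 / 2)) (Ici t) t)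
    (hT : t₀ ≤ T) :
    ∫ s in t₀..T, E s ≤ anchorLyapunov x x' E z t₀ - anchorLyapunov x x' E z T := by
  have hxc : Continuous x := continuous_iff_continuousAt.mpr fun t => (hx t).continuousAt
  have hx'c : Continuous x' := continuous_iff_continuousAt.mpr fun t => (hx' t).continuousAt
  have hfc : Continuous f :=
    continuous_iff_continuousAt.mpr fun y => (hf y).differentiableAt.continuousAt
  have hEc : Continuous E := by
    rw [funext hE]
    fun_prop
  have hVc : Continuous (anchorLyapunov x x' E z) := by
    unfold anchorLyapunov
    fun_prop
  have hdecay : ∀ s ≥ t₀, E s ≤ -(-⟪f' (x s), x s - z⟫ - ‖x' s‖ ^ 2 / 2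
      - ‖x' s‖ ^ 2 * ‖x s - z‖ ^ 2 / 4) := fun s _ => by
    have hsupp := hconv.add_inner_le_of_hasGradientAt (hf (x s)) z
    rw [← neg_sub (x s) z, inner_neg_right] at hsupp
    rw [hE s]
    nlinarith [mul_nonneg (sq_nonneg ‖x' s‖) (sq_nonneg ‖x s - z‖)]
  have := intervalIntegral.integral_le_sub_of_hasDeriv_right_of_le hT hVc.neg.continuousOn
    (fun s hs => ((hasDerivWithinAt_anchorLyapunov z (hx s) (hx' s) (hG s hs.1.le)
      (hODE s hs.1.le)).neg.mono Ioi_subset_Ici_self))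
    hEc.integrableOn_Icc (fun s hs => hdecay s hs.1.le)
  simp only [Pi.neg_apply] at this
  linarith

end DampedSystem

theorem stmt_6 {H : Type*} [NormedAddCommGroup H] [InnerProductSpace ℝ H] [CompleteSpace H]
    (f : H → ℝ) (f' : H → H)
    (hf : ∀ y, HasGradientAt f (f' y) y)
    (hconv : ConvexOn ℝ univ f)
    (z : H) (hz : ∀ y, f z ≤ f y)
    (fstar : ℝ) (hfstar : fstar = f z)
    (t₀ : ℝ) (x x' x'' : ℝ → H)
    (hx : ∀ t, HasDerivAt x (x' t) t)
    (hx' : ∀ t, HasDerivAt x' (x'' t) t)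
    (E : ℝ → ℝ) (hE : ∀ t, E t = f (x t) - fstar + ‖x' t‖ ^ 2 / 2)
    (hODE : ∀ t ≥ t₀, x'' t + Real.sqrt (E t) • x' t + f' (x t) = 0)
    (hbdd : ∃ M : ℝ, ∀ t ≥ t₀, ‖x t‖ ≤ M) :
    IntegrableOn E (Ici t₀) ∧
      Tendsto E atTop (nhds 0) ∧
      Tendsto (fun t => f (x t)) atTop (nhds fstar) ∧
      Tendsto (fun t => ‖x' t‖) atTop (nhds 0) := by
  obtain ⟨M, hM⟩ := hbdd
  subst hfstar
  have hgap : ∀ t, f (x t) - f z ≤ E t := fun t => by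
    rw [hE t]
    exact le_add_of_nonneg_right (by positivity)
  have hkin : ∀ t, ‖x' t‖ ^ 2 ≤ 2 * E t := fun t => by rw [hE t]; linarith [hz (x t)]
  have hE0 : ∀ t, 0 ≤ E t := fun t => (sub_nonneg.mpr (hz (x t))).trans (hgap t)
  have hspeed : ∀ t, ‖x' t‖ ≤ √(2 * E t) := fun t =>
    (le_abs_self _).trans (Real.abs_le_sqrt (hkin t))
  have hEd : ∀ t ≥ t₀, HasDerivAt E (-(√(E t) * ‖x' t‖ ^ 2)) t :=
    fun t ht => hasDerivAt_energy hf (hx t) (hx' t) hE (hODE t ht)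
  have hanti : AntitoneOn E (Ici t₀) :=
    antitoneOn_Ici_of_hasDerivAt_nonpos hEd fun t _ => neg_nonpos.mpr (by positivity)
  have hG : ∀ t ≥ t₀, HasDerivWithinAt (fun s => √(E s)) (-(‖x' t‖ ^ 2 / 2)) (Ici t) t :=
    fun t ht => hasDerivWithinAt_sqrt_of_antitoneOn (v := fun s => ‖x' s‖ ^ 2) hE0 hanti
      (fun h0 => le_antisymm (by linarith [hkin t]) (sq_nonneg _)) (hEd t ht) ht
  have hK : ∀ T ≥ t₀, ∫ s in t₀..T, E s
      ≤ anchorLyapunov x x' E z t₀ + √(2 * E t₀) * (M + ‖z‖) := fun T hT => by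
    have hspeed₀ : ‖x' T‖ ≤ √(2 * E t₀) :=
      (hspeed T).trans (Real.sqrt_le_sqrt (by linarith [hanti self_mem_Ici hT hT]))
    linarith [integral_energy_le_anchorLyapunov hf hconv hx hx' hE hODE hG hT,
      neg_anchorLyapunov_le (E := E) z hspeed₀ (hM T hT)]
  have hlim := hanti.tendsto_zero_of_intervalIntegral_le hE0 hK
  refine ⟨integrableOn_Ici_of_intervalIntegral_le hE0 hanti hK, hlim, ?_, ?_⟩
  · simpa using (squeeze_zero (fun t => sub_nonneg.mpr (hz (x t))) hgap hlim).add_const (f z)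
  · refine squeeze_zero (fun t => norm_nonneg _) hspeed ?_
    simpa using (hlim.const_mul 2).sqrt
end

section
/- In the setting of the Lyapunov-damped system (LD), for a non-constant bounded solution x (with f convex, C¹, attaining its minimum), there exists no α > 1 such that lim_{t→∞} t^α √(E(t)) = 0. Equivalently, ∫_{t₀}^{∞} √(E(t)) dt = ∞. -/
/-!
Along (LD), `E' = -√E ‖ẋ‖² ≥ -2 √E · E` because `‖ẋ‖² ≤ 2E`, so by Grönwall
`E t ≥ E t₁ · exp (-2 ∫_{t₁}^t √E)`. As `x` is not constant, `ẋ t₁ ≠ 0` for some `t₁ ≥ t₀`, so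
`E t₁ > 0`; integrability of `√E` would then keep `√E` above a positive constant on a half-line,
which is absurd. A decay `t ^ α √E → 0` with `α > 1` would make `√E` integrable by comparison
with `t ^ (-α)`.
-/

open Set Filter MeasureTheory Topology
open scoped RealInnerProductSpace

lemma exists_ge_hasDerivAt_ne_zero {E : Type*} [NormedAddCommGroup E] [NormedSpace ℝ E]
    {x x' : ℝ → E} {a s t : ℝ} (hx : ∀ t, HasDerivAt x (x' t) t) (hs : a ≤ s) (ht : a ≤ t)
    (hne : x s ≠ x t) : ∃ r ≥ a, x' r ≠ 0 := by
  by_contra! hzero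
  have hconst := constant_of_has_deriv_right_zero (a := a) (b := max s t)
    (fun r _ => (hx r).continuousAt.continuousWithinAt)
    (fun r hr => hzero r hr.1 ▸ (hx r).hasDerivWithinAt)
  exact hne ((hconst s ⟨hs, le_max_left s t⟩).trans (hconst t ⟨ht, le_max_right s t⟩).symm)

lemma not_integrableOn_Ici_of_pos_le {g : ℝ → ℝ} {a c : ℝ} (hc : 0 < c)
    (hle : ∀ t ≥ a, c ≤ g t) : ¬ IntegrableOn g (Ici a) := by
  intro hg
  have hconst : IntegrableOn (fun _ => c) (Ici a) := by
    refine hg.mono' aestronglyMeasurable_const ?_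
    filter_upwards [ae_restrict_mem measurableSet_Ici] with t ht
    rw [Real.norm_of_nonneg hc.le]
    exact hle t ht
  simp [integrableOn_const_iff, hc.ne', Real.volume_Ici] at hconst

lemma integrableOn_Ici_of_tendsto_rpow_mul {g : ℝ → ℝ} {a α l : ℝ}
    (hg : LocallyIntegrableOn g (Ici a)) (hα : 1 < α)
    (hlim : Tendsto (fun t => t ^ α * g t) atTop (𝓝 l)) : IntegrableOn g (Ici a) := by
  have hbigO : g =O[atTop] fun t => t ^ (-α) := by
    refine ((hlim.isBigO_one ℝ).mul (Asymptotics.isBigO_refl (fun t => t ^ (-α)) _)).congr' ?_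
      (by simp)
    filter_upwards [eventually_gt_atTop 0] with t ht
    rw [mul_comm, ← mul_assoc, ← Real.rpow_add ht, neg_add_cancel, Real.rpow_zero, one_mul]
  exact hg.integrableOn_of_isBigO_atTop hbigO
    ⟨Ioi 1, Ioi_mem_atTop 1, integrableOn_Ioi_rpow_of_lt (by linarith) one_pos⟩

lemma mul_exp_neg_integral_le_of_hasDerivAt {u u' g : ℝ → ℝ} {a t : ℝ} (hg : Continuous g)
    (hu : ∀ t, HasDerivAt u (u' t) t) (hu' : ∀ t > a, -(g t * u t) ≤ u' t) (ht : a ≤ t) :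
    u a * Real.exp (-∫ s in a..t, g s) ≤ u t := by
  set φ : ℝ → ℝ := fun t => ∫ s in a..t, g s
  have hφ : ∀ t, HasDerivAt φ (g t) t := fun t =>
    intervalIntegral.integral_hasDerivAt_right (hg.intervalIntegrable a t)
      hg.aestronglyMeasurable.stronglyMeasurableAtFilter hg.continuousAt
  have hG : ∀ t, HasDerivAt (fun t => u t * Real.exp (φ t))
      ((u' t + g t * u t) * Real.exp (φ t)) t := fun t =>
    ((hu t).mul (hφ t).exp).congr_deriv (by ring)
  have hmono : MonotoneOn (fun t => u t * Real.exp (φ t)) (Ici a) := by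
    refine monotoneOn_of_deriv_nonneg (convex_Ici a)
      (fun t _ => (hG t).continuousAt.continuousWithinAt)
      (fun t _ => (hG t).differentiableAt.differentiableWithinAt) fun t ht => ?_
    rw [interior_Ici] at ht
    rw [(hG t).deriv]
    exact mul_nonneg (by linarith [hu' t ht]) (Real.exp_pos _).le
  have hle := hmono self_mem_Ici ht ht
  simp only [φ, intervalIntegral.integral_same, Real.exp_zero, mul_one] at hle
  rw [Real.exp_neg, ← div_eq_mul_inv, div_le_iff₀ (Real.exp_pos _)]
  exact hle

lemma not_integrableOn_sqrt_of_neg_mul_sqrt_le_deriv {u u' : ℝ → ℝ} {a : ℝ}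
    (hu : ∀ t, HasDerivAt u (u' t) t) (ha : 0 < u a)
    (hu' : ∀ t > a, -(2 * √(u t) * u t) ≤ u' t) : ¬ IntegrableOn (fun t => √(u t)) (Ici a) := by
  intro hint
  have hcont : Continuous fun t => 2 * √(u t) :=
    continuous_const.mul (Differentiable.continuous fun t => (hu t).differentiableAt).sqrt
  set c := u a * Real.exp (-∫ s in Ici a, 2 * √(u s))
  have hlow : ∀ t ≥ a, c ≤ u t := fun t ht => by
    refine le_trans (mul_le_mul_of_nonneg_left (Real.exp_le_exp.2 (neg_le_neg ?_)) ha.le)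
      (mul_exp_neg_integral_le_of_hasDerivAt hcont hu hu' ht)
    rw [intervalIntegral.integral_of_le ht]
    exact setIntegral_mono_set (hint.const_mul 2) (.of_forall fun s => by positivity)
      (Ioc_subset_Ioi_self.trans Ioi_subset_Ici_self).eventuallyLE
  exact not_integrableOn_Ici_of_pos_le (Real.sqrt_pos.2 (by positivity))
    (fun t ht => Real.sqrt_le_sqrt (hlow t ht)) hint

section DampedSystem

variable {H : Type*} [NormedAddCommGroup H] [InnerProductSpace ℝ H]

lemma hasDerivAt_comp_add_half_norm_sq [CompleteSpace H] {f : H → ℝ} {g a : H} {x x' : ℝ → H}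
    {t : ℝ} (hf : HasGradientAt f g (x t)) (hx : HasDerivAt x (x' t) t)
    (hx' : HasDerivAt x' a t) :
    HasDerivAt (fun s => f (x s) + ‖x' s‖ ^ 2 / 2) (⟪g, x' t⟫ + ⟪x' t, a⟫) t := by
  have hpot : HasDerivAt (fun s => f (x s)) ⟪g, x' t⟫ t := by
    have hchain := hf.hasFDerivAt.comp_hasDerivAt t hx
    simp only [InnerProductSpace.toDual_apply_apply] at hchain
    exact hchain
  have hkin : HasDerivAt (fun s => ‖x' s‖ ^ 2 / 2) ⟪x' t, a⟫ t := by
    simp_rw [← real_inner_self_eq_norm_sq]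
    exact ((hx'.inner ℝ hx').div_const 2).congr_deriv (by rw [real_inner_comm a]; ring)
  exact hpot.add hkin

lemma inner_add_inner_eq_of_add_smul_add_eq_zero {a v g : H} {γ : ℝ}
    (h : a + γ • v + g = 0) : ⟪g, v⟫ + ⟪v, a⟫ = -(γ * ‖v‖ ^ 2) := by
  have ha : a = -(γ • v) - g := by linear_combination (norm := module) h
  rw [ha, inner_sub_right, inner_neg_right, real_inner_smul_right, real_inner_self_eq_norm_sq,
    real_inner_comm]
  ring

end DampedSystem

theorem stmt_10_general {H : Type*} [NormedAddCommGroup H] [InnerProductSpace ℝ H] [CompleteSpace H]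
    (f : H → ℝ) (f' : H → H)
    (hf : ∀ y, HasGradientAt f (f' y) y)
    (z : H) (hz : ∀ y, f z ≤ f y)
    (fstar : ℝ) (hfstar : fstar = f z)
    (t₀ : ℝ) (x x' x'' : ℝ → H)
    (hx : ∀ t, HasDerivAt x (x' t) t)
    (hx' : ∀ t, HasDerivAt x' (x'' t) t)
    (E : ℝ → ℝ) (hE : ∀ t, E t = f (x t) - fstar + ‖x' t‖ ^ 2 / 2)
    (hODE : ∀ t ≥ t₀, x'' t + Real.sqrt (E t) • x' t + f' (x t) = 0)
    (hnc : ∃ s t : ℝ, s ≥ t₀ ∧ t ≥ t₀ ∧ x s ≠ x t) :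
    (¬ ∃ α > (1 : ℝ), Tendsto (fun t => t ^ α * Real.sqrt (E t)) atTop (nhds 0)) ∧
      ¬ IntegrableOn (fun t => Real.sqrt (E t)) (Ici t₀) := by
  have hEderiv : ∀ t, HasDerivAt E (⟪f' (x t), x' t⟫ + ⟪x' t, x'' t⟫) t := fun t => by
    have hEeq : E = fun s => f (x s) + ‖x' s‖ ^ 2 / 2 - fstar := funext fun s => by
      rw [hE s]
      ring
    rw [hEeq]
    exact (hasDerivAt_comp_add_half_norm_sq (hf (x t)) (hx t) (hx' t)).sub_const fstar
  have hkinetic : ∀ t, ‖x' t‖ ^ 2 ≤ 2 * E t := fun t => by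
    linarith [hE t, hz (x t)]
  have hdecay : ∀ t > t₀, -(2 * √(E t) * E t) ≤ ⟪f' (x t), x' t⟫ + ⟪x' t, x'' t⟫ := fun t ht => by
    rw [inner_add_inner_eq_of_add_smul_add_eq_zero (hODE t ht.le)]
    nlinarith [mul_le_mul_of_nonneg_left (hkinetic t) (Real.sqrt_nonneg (E t))]
  obtain ⟨s, t, hs, ht, hne⟩ := hnc
  obtain ⟨t₁, ht₁, hmoving⟩ := exists_ge_hasDerivAt_ne_zero hx hs ht hne
  have hpos : 0 < E t₁ := by
    linarith [hkinetic t₁, pow_pos (norm_pos_iff.2 hmoving) 2]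
  have hnot : ¬ IntegrableOn (fun t => √(E t)) (Ici t₀) := fun hint =>
    not_integrableOn_sqrt_of_neg_mul_sqrt_le_deriv hEderiv hpos
      (fun t ht => hdecay t (ht₁.trans_lt ht)) (hint.mono_set (Ici_subset_Ici.2 ht₁))
  have hlocal : LocallyIntegrableOn (fun t => √(E t)) (Ici t₀) :=
    (Differentiable.continuous fun t => (hEderiv t).differentiableAt).sqrt.continuousOn
      |>.locallyIntegrableOn measurableSet_Ici
  exact ⟨fun ⟨α, hα, hlim⟩ => hnot (integrableOn_Ici_of_tendsto_rpow_mul hlocal hα hlim), hnot⟩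

theorem stmt_10 {H : Type*} [NormedAddCommGroup H] [InnerProductSpace ℝ H] [CompleteSpace H]
    (f : H → ℝ) (f' : H → H)
    (hf : ∀ y, HasGradientAt f (f' y) y)
    (hconv : ConvexOn ℝ univ f)
    (z : H) (hz : ∀ y, f z ≤ f y)
    (fstar : ℝ) (hfstar : fstar = f z)
    (t₀ : ℝ) (x x' x'' : ℝ → H)
    (hx : ∀ t, HasDerivAt x (x' t) t)
    (hx' : ∀ t, HasDerivAt x' (x'' t) t)
    (E : ℝ → ℝ) (hE : ∀ t, E t = f (x t) - fstar + ‖x' t‖ ^ 2 / 2)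
    (hODE : ∀ t ≥ t₀, x'' t + Real.sqrt (E t) • x' t + f' (x t) = 0)
    (hbdd : ∃ M : ℝ, ∀ t ≥ t₀, ‖x t‖ ≤ M)
    (hnc : ∃ s t : ℝ, s ≥ t₀ ∧ t ≥ t₀ ∧ x s ≠ x t) :
    (¬ ∃ α > (1 : ℝ), Tendsto (fun t => t ^ α * Real.sqrt (E t)) atTop (nhds 0)) ∧
      ¬ IntegrableOn (fun t => Real.sqrt (E t)) (Ici t₀) :=
  stmt_10_general f f' hf z hz fstar hfstar t₀ x x' x'' hx hx' E hE hODE hnc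
end

section
/- In the setting of the Lyapunov-damped system (LD), for all t ≥ t₀: E'(t) + 2√(E(t)) E(t) = 2√(E(t)) (f(x(t)) - f*) ≥ 0. Consequently, for all t ≥ t₀, E(t) ≥ E(t₀) · exp(-2 ∫_{t₀}^{t} √(E(s)) ds). -/
/-!
Since `E ≥ f(x) - f* ≥ 0` and `E' = -√E ‖ẋ‖²`, the identity `E' + 2√E E = 2√E (f(x) - f*)` is
algebra, and its right-hand side is nonnegative. A differential inequality `u' ≥ -a u` makes
`u(t) exp(∫_{t₀}^t a)` nondecreasing, which is the exponential lower bound with `a = 2√E`.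
-/

open Set intervalIntegral

theorem monotoneOn_mul_exp_integral_of_neg_mul_le_deriv {u u' a : ℝ → ℝ} {t₀ : ℝ}
    (ha : Continuous a) (hu : ∀ t ≥ t₀, HasDerivAt u (u' t) t)
    (hineq : ∀ t ≥ t₀, -(a t * u t) ≤ u' t) :
    MonotoneOn (fun t => u t * Real.exp (∫ s in t₀..t, a s)) (Ici t₀) := by
  set F : ℝ → ℝ := fun t => ∫ s in t₀..t, a s
  have hF : ∀ t, HasDerivAt F (a t) t := fun t => (ha.integral_hasStrictDerivAt t₀ t).hasDerivAt
  have hG : ∀ t ≥ t₀, HasDerivAt (fun t => u t * Real.exp (F t))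
      (u' t * Real.exp (F t) + u t * (Real.exp (F t) * a t)) t :=
    fun t ht => (hu t ht).mul (hF t).exp
  apply monotoneOn_of_deriv_nonneg (convex_Ici t₀)
  · exact fun t ht => (hG t ht).continuousAt.continuousWithinAt
  · rw [interior_Ici]
    exact fun t ht => (hG t (le_of_lt ht)).differentiableAt.differentiableWithinAt
  · rw [interior_Ici]
    intro t ht
    rw [(hG t (le_of_lt ht)).deriv]
    have h := hineq t (le_of_lt ht)
    have hexp := Real.exp_pos (F t)
    nlinarith

theorem mul_exp_neg_integral_le_of_neg_mul_le_deriv {u u' a : ℝ → ℝ} {t₀ t : ℝ}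
    (ha : ContinuousOn a (Ici t₀)) (hu : ∀ t ≥ t₀, HasDerivAt u (u' t) t)
    (hineq : ∀ t ≥ t₀, -(a t * u t) ≤ u' t) (ht : t₀ ≤ t) :
    u t₀ * Real.exp (-∫ s in t₀..t, a s) ≤ u t := by
  set b : ℝ → ℝ := fun s => a (max s t₀)
  have hb : Continuous b :=
    ha.comp_continuous (continuous_id.max continuous_const) fun s => le_max_right s t₀
  have hab : ∀ s ≥ t₀, b s = a s := fun s hs => by simp only [b, max_eq_left hs]
  have hmono := monotoneOn_mul_exp_integral_of_neg_mul_le_deriv hb hu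
    (fun s hs => hab s hs ▸ hineq s hs) self_mem_Ici ht ht
  have hint : ∫ s in t₀..t, a s = ∫ s in t₀..t, b s :=
    integral_congr fun s hs => (hab s (uIcc_of_le ht ▸ hs).1).symm
  simp only [integral_same, Real.exp_zero, mul_one] at hmono
  rw [hint, Real.exp_neg, ← div_eq_mul_inv, div_le_iff₀ (Real.exp_pos _)]
  exact hmono

theorem stmt_11_general {H : Type*} [NormedAddCommGroup H]
    (f : H → ℝ)
    (fstar : ℝ) (hfstar : ∀ y, fstar ≤ f y)
    (t₀ : ℝ) (x x' : ℝ → H)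
    (E E' : ℝ → ℝ) (hE : ∀ t, E t = f (x t) - fstar + ‖x' t‖ ^ 2 / 2)
    (hE' : ∀ t ≥ t₀, HasDerivAt E (E' t) t)
    (hE'eq : ∀ t ≥ t₀, E' t = -(Real.sqrt (E t) * ‖x' t‖ ^ 2)) :
    (∀ t ≥ t₀,
      E' t + 2 * Real.sqrt (E t) * E t = 2 * Real.sqrt (E t) * (f (x t) - fstar) ∧
      0 ≤ 2 * Real.sqrt (E t) * (f (x t) - fstar)) ∧
    ∀ t ≥ t₀,
      E t ≥ E t₀ * Real.exp (-2 * ∫ s in t₀..t, Real.sqrt (E s)) := by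
  have hgap : ∀ t, 0 ≤ 2 * Real.sqrt (E t) * (f (x t) - fstar) := fun t =>
    mul_nonneg (by positivity) (sub_nonneg.2 (hfstar (x t)))
  have hid : ∀ t ≥ t₀, E' t + 2 * Real.sqrt (E t) * E t
      = 2 * Real.sqrt (E t) * (f (x t) - fstar) := fun t ht => by
    rw [hE'eq t ht, hE t]; ring
  refine ⟨fun t ht => ⟨hid t ht, hgap t⟩, fun t ht => ?_⟩
  have hsqrt : ContinuousOn (fun s => 2 * Real.sqrt (E s)) (Ici t₀) := fun s hs =>
    ((hE' s hs).continuousAt.sqrt.const_mul 2).continuousWithinAt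
  have h := mul_exp_neg_integral_le_of_neg_mul_le_deriv hsqrt hE'
    (fun s hs => by linarith [hid s hs, hgap s]) ht
  rwa [integral_const_mul, ← neg_mul] at h

theorem stmt_11 {H : Type*} [NormedAddCommGroup H] [InnerProductSpace ℝ H] [CompleteSpace H]
    (f : H → ℝ) (f' : H → H)
    (hf : ∀ y, HasGradientAt f (f' y) y)
    (hconv : ConvexOn ℝ univ f)
    (fstar : ℝ) (hfstar : ∀ y, fstar ≤ f y)
    (t₀ : ℝ) (x x' x'' : ℝ → H)
    (hx : ∀ t, HasDerivAt x (x' t) t)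
    (hx' : ∀ t, HasDerivAt x' (x'' t) t)
    (E E' : ℝ → ℝ) (hE : ∀ t, E t = f (x t) - fstar + ‖x' t‖ ^ 2 / 2)
    (hODE : ∀ t ≥ t₀, x'' t + Real.sqrt (E t) • x' t + f' (x t) = 0)
    (hE' : ∀ t ≥ t₀, HasDerivAt E (E' t) t)
    (hE'eq : ∀ t ≥ t₀, E' t = -(Real.sqrt (E t) * ‖x' t‖ ^ 2)) :
    (∀ t ≥ t₀,
      E' t + 2 * Real.sqrt (E t) * E t = 2 * Real.sqrt (E t) * (f (x t) - fstar) ∧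
      0 ≤ 2 * Real.sqrt (E t) * (f (x t) - fstar)) ∧
    ∀ t ≥ t₀,
      E t ≥ E t₀ * Real.exp (-2 * ∫ s in t₀..t, Real.sqrt (E s)) :=
  stmt_11_general f fstar hfstar t₀ x x' E E' hE hE' hE'eq
end

section
/- Let f be convex C¹ with L-Lipschitz gradient and infimum f* attained; fix 0 < s ≤ 1/L. Consider the LYDIA iteration: given x_{k-1}, x_k, set E_k = f(x_k) - f* + (1/(2s))‖x_k - x_{k-1}‖², β_k = √(E_k/E_0), y_k = x_k + (1 - β_k)(x_k - x_{k-1}), x_{k+1} = y_k - s∇f(y_k). Then for all k: E_{k+1} ≤ E_k - (β_k/s)(1 - β_k/2)‖x_k - x_{k-1}‖² - (s/2)‖∇f(x_k) - ∇f(y_k)‖². -/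
/-!
Two first-order consequences of convexity and `L`-smoothness carry the argument. The descent
lemma gives `f (p - s • v) ≤ f p - s ⟪∇f p, v⟫ + (s/2) ‖v‖²` whenever `L s ≤ 1`; comparing it at
`b` with the convexity lower bound at `a`, both evaluated at `b - s (∇f b - ∇f a)`, yields
`f a + ⟪∇f a, b - a⟫ + (s/2) ‖∇f b - ∇f a‖² ≤ f b`. Together they bound `f x_{k+1}`, and adding
the expansion of `‖x_{k+1} - x_k‖²` cancels the inner product `⟪∇f y_k, y_k - x_k⟫`. Since
`y_k - x_k = (1 - β_k) (x_k - x_{k-1})`, the kinetic term is multiplied by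
`(1 - β_k)² = 1 - 2 β_k (1 - β_k / 2)`.
-/

open Set

open scoped RealInnerProductSpace NNReal

section

variable {H : Type*} [NormedAddCommGroup H] [InnerProductSpace ℝ H] [CompleteSpace H]
  {f : H → ℝ} {f' : H → H}

theorem HasGradientAt.hasDerivAt_comp_lineMap {a b g : H} {t : ℝ}
    (hf : HasGradientAt f g (AffineMap.lineMap a b t)) :
    HasDerivAt (fun t : ℝ ↦ f (AffineMap.lineMap a b t)) ⟪g, b - a⟫ t := by
  have := hf.hasFDerivAt.comp_hasDerivAt t AffineMap.hasDerivAt_lineMap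
  rwa [InnerProductSpace.toDual_apply_apply] at this

theorem ConvexOn.add_inner_sub_le_of_hasGradientAt (hconv : ConvexOn ℝ univ f) {a g : H}
    (hf : HasGradientAt f g a) (b : H) : f a + ⟪g, b - a⟫ ≤ f b := by
  have hline : ConvexOn ℝ univ (fun t : ℝ ↦ f (AffineMap.lineMap a b t)) :=
    hconv.comp_affineMap (AffineMap.lineMap a b)
  have hderiv : HasDerivAt (fun t : ℝ ↦ f (AffineMap.lineMap a b t)) ⟪g, b - a⟫ 0 :=
    HasGradientAt.hasDerivAt_comp_lineMap (by rwa [AffineMap.lineMap_apply_zero])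
  have := hline.le_slope_of_hasDerivAt (mem_univ 0) (mem_univ 1) one_pos hderiv
  simp only [slope_def_field, AffineMap.lineMap_apply_one, AffineMap.lineMap_apply_zero, sub_zero,
    div_one] at this
  linarith

theorem le_add_inner_sub_add_sq_of_lipschitzWith {K : ℝ≥0} (hf : ∀ x, HasGradientAt f (f' x) x)
    (hlip : LipschitzWith K f') (a b : H) :
    f b ≤ f a + ⟪f' a, b - a⟫ + K / 2 * ‖b - a‖ ^ 2 := by
  set γ := AffineMap.lineMap (k := ℝ) a b
  let φ : ℝ → ℝ := fun t ↦ f (γ t) - t * ⟪f' a, b - a⟫ - K / 2 * ‖b - a‖ ^ 2 * t ^ 2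
  have hφ : ∀ t, HasDerivAt φ
      (⟪f' (γ t) - f' a, b - a⟫ - K * ‖b - a‖ ^ 2 * t) t := fun t ↦ by
    have := ((hf (γ t)).hasDerivAt_comp_lineMap.sub
      ((hasDerivAt_id t).mul_const ⟪f' a, b - a⟫)).sub
      ((hasDerivAt_pow 2 t).const_mul (K / 2 * ‖b - a‖ ^ 2))
    refine this.congr_deriv ?_
    rw [inner_sub_left]
    simp only [one_mul, Nat.cast_ofNat, Nat.add_one_sub_one, pow_one]
    ring
  have hφ_nonpos : ∀ t ∈ interior (Ici (0 : ℝ)),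
      ⟪f' (γ t) - f' a, b - a⟫ - K * ‖b - a‖ ^ 2 * t ≤ 0 := by
    intro t ht
    rw [interior_Ici] at ht
    have hdist : ‖f' (γ t) - f' a‖ ≤ K * (t * ‖b - a‖) := by
      have hγ : γ t - a = t • (b - a) := AffineMap.lineMap_vsub_left a b t
      simpa [dist_eq_norm, hγ, norm_smul, abs_of_pos ht.out] using hlip.dist_le_mul (γ t) a
    rw [sub_nonpos]
    calc ⟪f' (γ t) - f' a, b - a⟫ ≤ ‖f' (γ t) - f' a‖ * ‖b - a‖ := real_inner_le_norm _ _
      _ ≤ K * (t * ‖b - a‖) * ‖b - a‖ := by gcongr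
      _ = K * ‖b - a‖ ^ 2 * t := by ring
  have hanti : AntitoneOn φ (Ici 0) :=
    antitoneOn_of_hasDerivWithinAt_nonpos (convex_Ici 0)
      (fun t _ ↦ (hφ t).continuousAt.continuousWithinAt)
      (fun t _ ↦ (hφ t).hasDerivWithinAt) hφ_nonpos
  have h0 : φ 0 = f a := by simp [φ, γ]
  have h1 : φ 1 = f b - ⟪f' a, b - a⟫ - K / 2 * ‖b - a‖ ^ 2 := by simp [φ, γ]
  have := hanti self_mem_Ici (mem_Ici.2 zero_le_one) zero_le_one
  rw [h0, h1] at this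
  linarith

theorem apply_sub_smul_le_of_lipschitzWith {K : ℝ≥0} (hf : ∀ x, HasGradientAt f (f' x) x)
    (hlip : LipschitzWith K f') {s : ℝ} (hs0 : 0 ≤ s) (hsK : K * s ≤ 1) (p v : H) :
    f (p - s • v) ≤ f p - s * ⟪f' p, v⟫ + s / 2 * ‖v‖ ^ 2 := by
  have h := le_add_inner_sub_add_sq_of_lipschitzWith hf hlip p (p - s • v)
  rw [sub_sub_cancel_left, inner_neg_right, inner_smul_right, norm_neg, norm_smul,
    Real.norm_of_nonneg hs0] at h
  nlinarith [mul_nonneg (mul_nonneg hs0 (sq_nonneg ‖v‖)) (sub_nonneg.2 hsK)]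

theorem apply_sub_smul_gradient_le {K : ℝ≥0} (hf : ∀ x, HasGradientAt f (f' x) x)
    (hlip : LipschitzWith K f') {s : ℝ} (hs0 : 0 ≤ s) (hsK : K * s ≤ 1) (p : H) :
    f (p - s • f' p) ≤ f p - s / 2 * ‖f' p‖ ^ 2 := by
  have h := apply_sub_smul_le_of_lipschitzWith hf hlip hs0 hsK p (f' p)
  rw [real_inner_self_eq_norm_sq] at h
  linarith

theorem ConvexOn.add_inner_sub_add_sq_le {K : ℝ≥0} (hconv : ConvexOn ℝ univ f)
    (hf : ∀ x, HasGradientAt f (f' x) x) (hlip : LipschitzWith K f') {s : ℝ} (hs0 : 0 ≤ s)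
    (hsK : K * s ≤ 1) (a b : H) :
    f a + ⟪f' a, b - a⟫ + s / 2 * ‖f' b - f' a‖ ^ 2 ≤ f b := by
  set d := f' b - f' a
  have hlower := hconv.add_inner_sub_le_of_hasGradientAt (hf a) (b - s • d)
  have hupper := apply_sub_smul_le_of_lipschitzWith hf hlip hs0 hsK b d
  have hd : ⟪f' b, d⟫ = ⟪f' a, d⟫ + ‖d‖ ^ 2 := by
    rw [← real_inner_self_eq_norm_sq, ← inner_add_left, add_sub_cancel]
  rw [sub_right_comm, inner_sub_right, inner_smul_right] at hlower
  rw [hd] at hupper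
  linarith

theorem ConvexOn.apply_gradient_step_le {K : ℝ≥0} (hconv : ConvexOn ℝ univ f)
    (hf : ∀ x, HasGradientAt f (f' x) x) (hlip : LipschitzWith K f') {s : ℝ} (hs0 : 0 ≤ s)
    (hsK : K * s ≤ 1) (x y : H) :
    f (y - s • f' y) ≤ f x + ⟪f' y, y - x⟫ - s / 2 * ‖f' y‖ ^ 2 - s / 2 * ‖f' x - f' y‖ ^ 2 := by
  have hstep := apply_sub_smul_gradient_le hf hlip hs0 hsK y
  have hcoco := hconv.add_inner_sub_add_sq_le hf hlip hs0 hsK y x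
  rw [← neg_sub y x, inner_neg_right] at hcoco
  linarith

theorem lydia_energy_step {K : ℝ≥0} (hconv : ConvexOn ℝ univ f)
    (hf : ∀ x, HasGradientAt f (f' x) x) (hlip : LipschitzWith K f') {s : ℝ} (hs0 : 0 < s)
    (hsK : K * s ≤ 1) {xprev x y : H} {b : ℝ} (hy : y = x + (1 - b) • (x - xprev)) :
    f (y - s • f' y) + ‖y - s • f' y - x‖ ^ 2 / (2 * s)
      ≤ f x + ‖x - xprev‖ ^ 2 / (2 * s) - b / s * (1 - b / 2) * ‖x - xprev‖ ^ 2
        - s / 2 * ‖f' x - f' y‖ ^ 2 := by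
  have hdesc := hconv.apply_gradient_step_le hf hlip hs0.le hsK x y
  have hyx : ‖y - x‖ ^ 2 = (1 - b) ^ 2 * ‖x - xprev‖ ^ 2 := by
    rw [hy, add_sub_cancel_left, norm_smul, mul_pow, Real.norm_eq_abs, sq_abs]
  have hnorm : ‖y - s • f' y - x‖ ^ 2 / (2 * s)
      = (1 - b) ^ 2 * ‖x - xprev‖ ^ 2 / (2 * s) - ⟪f' y, y - x⟫ + s / 2 * ‖f' y‖ ^ 2 := by
    rw [sub_right_comm, norm_sub_sq_real, hyx, inner_smul_right, real_inner_comm, norm_smul,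
      Real.norm_of_nonneg hs0.le]
    field_simp
  have hcoef : (1 - b) ^ 2 * ‖x - xprev‖ ^ 2 / (2 * s)
      = ‖x - xprev‖ ^ 2 / (2 * s) - b / s * (1 - b / 2) * ‖x - xprev‖ ^ 2 := by
    field_simp
    ring
  linarith

end

/-- `u k` is `x_{k-1}`, so `u (k + 1) = x_k`. -/
theorem stmt_13_general {H : Type*} [NormedAddCommGroup H] [InnerProductSpace ℝ H] [CompleteSpace H]
    (f : H → ℝ) (f' : H → H)
    (hf : ∀ y, HasGradientAt f (f' y) y)
    (hconv : ConvexOn ℝ univ f)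
    (L : ℝ) (hL : 0 < L) (hlip : LipschitzWith (Real.toNNReal L) f')
    (fstar : ℝ)
    (s : ℝ) (hs0 : 0 < s) (hs : s ≤ 1 / L)
    (u : ℕ → H) (E β : ℕ → ℝ) (y : ℕ → H)
    (hE : ∀ k, E k = f (u (k + 1)) - fstar + ‖u (k + 1) - u k‖ ^ 2 / (2 * s))
    (hy : ∀ k, y k = u (k + 1) + (1 - β k) • (u (k + 1) - u k))
    (hiter : ∀ k, u (k + 2) = y k - s • f' (y k)) :
    ∀ k, E (k + 1) ≤ E k - (β k / s) * (1 - β k / 2) * ‖u (k + 1) - u k‖ ^ 2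
      - (s / 2) * ‖f' (u (k + 1)) - f' (y k)‖ ^ 2 := by
  intro k
  have hsL : (L.toNNReal : ℝ) * s ≤ 1 := by
    rw [Real.coe_toNNReal L hL.le]
    exact (le_div_iff₀' hL).mp hs
  have hstep := lydia_energy_step hconv hf hlip hs0 hsL (hy k)
  rw [hE, hE, show k + 1 + 1 = k + 2 from rfl, hiter k]
  linarith

/-- LYDIA one-step decrease. Here `u k` denotes `x_{k-1}`, i.e. `u (k+1) = x_k`. -/
theorem stmt_13 {H : Type*} [NormedAddCommGroup H] [InnerProductSpace ℝ H] [CompleteSpace H]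
    (f : H → ℝ) (f' : H → H)
    (hf : ∀ y, HasGradientAt f (f' y) y)
    (hconv : ConvexOn ℝ univ f)
    (L : ℝ) (hL : 0 < L) (hlip : LipschitzWith (Real.toNNReal L) f')
    (z : H) (hz : ∀ y, f z ≤ f y) (fstar : ℝ) (hfstar : fstar = f z)
    (s : ℝ) (hs0 : 0 < s) (hs : s ≤ 1 / L)
    (u : ℕ → H) (E β : ℕ → ℝ) (y : ℕ → H)
    (hE : ∀ k, E k = f (u (k + 1)) - fstar + ‖u (k + 1) - u k‖ ^ 2 / (2 * s))
    (hE0 : 0 < E 0)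
    (hβ : ∀ k, β k = Real.sqrt (E k / E 0))
    (hy : ∀ k, y k = u (k + 1) + (1 - β k) • (u (k + 1) - u k))
    (hiter : ∀ k, u (k + 2) = y k - s • f' (y k)) :
    ∀ k, E (k + 1) ≤ E k - (β k / s) * (1 - β k / 2) * ‖u (k + 1) - u k‖ ^ 2
      - (s / 2) * ‖f' (u (k + 1)) - f' (y k)‖ ^ 2 :=
  stmt_13_general f f' hf hconv L hL hlip fstar s hs0 hs u E β y hE hy hiter
end

section
/- Let E : [t₀,∞) → [0,∞) be continuous with E(t) → 0 as t → ∞ and E(t₀) > 0. If there exists α > 1 such that t^α √(E(t)) → 0 as t → ∞, and if E satisfies E(t) ≥ E(t₀) exp(-2∫_{t₀}^{t} √(E(s)) ds) for all t ≥ t₀, then a contradiction follows; hence no such α exists. -/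
/-!
Decay `t ^ α * √E t → 0` with `α > 1` gives `√E = O(t ^ (-α))`, which is integrable at infinity, so
`I = ∫_{t₀}^∞ √E` is finite. The Grönwall bound then keeps `E t ≥ E t₀ * exp (-2 I) > 0` for all
`t ≥ t₀`, which is incompatible with `E t → 0`.
-/

open Set Filter intervalIntegral

open MeasureTheory Asymptotics Topology

theorem isBigO_rpow_neg_of_tendsto_rpow_mul_zero {f : ℝ → ℝ} {α : ℝ}
    (hf : Tendsto (fun t => t ^ α * f t) atTop (𝓝 0)) :
    f =O[atTop] fun t => t ^ (-α) := by
  refine ((isBigO_refl (fun t : ℝ => t ^ (-α)) atTop).mul (hf.isBigO_one ℝ)).congr' ?_ (by simp)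
  filter_upwards [eventually_gt_atTop 0] with t ht
  rw [← mul_assoc, ← Real.rpow_add ht, neg_add_cancel, Real.rpow_zero, one_mul]

theorem integrableOn_Ici_of_tendsto_rpow_mul_zero {f : ℝ → ℝ} {a α : ℝ}
    (hcont : ContinuousOn f (Ici a)) (hα : 1 < α)
    (hf : Tendsto (fun t => t ^ α * f t) atTop (𝓝 0)) :
    IntegrableOn f (Ici a) :=
  (hcont.locallyIntegrableOn measurableSet_Ici).integrableOn_of_isBigO_atTop
    (isBigO_rpow_neg_of_tendsto_rpow_mul_zero hf)
    (integrableAtFilter_rpow_atTop_iff.mpr (by linarith))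

theorem intervalIntegral_le_setIntegral_Ici {f : ℝ → ℝ} {μ : Measure ℝ} {a b : ℝ}
    (hab : a ≤ b) (hfi : IntegrableOn f (Ici a) μ) (hf : ∀ x ∈ Ici a, 0 ≤ f x) :
    ∫ x in a..b, f x ∂μ ≤ ∫ x in Ici a, f x ∂μ := by
  rw [integral_of_le hab]
  exact setIntegral_mono_set hfi ((ae_restrict_iff' measurableSet_Ici).mpr (ae_of_all _ hf))
    (Ioc_subset_Ioi_self.trans Ioi_subset_Ici_self).eventuallyLE

theorem stmt_18_general (t₀ : ℝ) (E : ℝ → ℝ)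
    (hcont : ContinuousOn E (Ici t₀))
    (hE0 : 0 < E t₀)
    (hlim : Tendsto E atTop (nhds 0))
    (hgronwall : ∀ t ≥ t₀,
      E t ≥ E t₀ * Real.exp (-2 * ∫ s in t₀..t, Real.sqrt (E s))) :
    ¬ ∃ α > (1 : ℝ), Tendsto (fun t => t ^ α * Real.sqrt (E t)) atTop (nhds 0) := by
  rintro ⟨α, hα, hdecay⟩
  set I := ∫ s in Ici t₀, Real.sqrt (E s)
  have hint : IntegrableOn (fun s => Real.sqrt (E s)) (Ici t₀) :=
    integrableOn_Ici_of_tendsto_rpow_mul_zero (Real.continuous_sqrt.comp_continuousOn hcont)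
      hα hdecay
  have hlower : ∀ t ≥ t₀, E t₀ * Real.exp (-2 * I) ≤ E t := fun t ht =>
    calc E t₀ * Real.exp (-2 * I)
        ≤ E t₀ * Real.exp (-2 * ∫ s in t₀..t, Real.sqrt (E s)) := by
          have hI := intervalIntegral_le_setIntegral_Ici ht hint fun _ _ => Real.sqrt_nonneg _
          gcongr ?_ * Real.exp ?_
          linarith
      _ ≤ E t := hgronwall t ht
  have hc : 0 < E t₀ * Real.exp (-2 * I) := by positivity
  obtain ⟨t, hsmall, ht⟩ :=
    ((hlim.eventually_lt_const hc).and (eventually_ge_atTop t₀)).exists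
  exact (hlower t ht).not_gt hsmall

theorem stmt_18 (t₀ : ℝ) (ht₀ : 0 < t₀) (E : ℝ → ℝ)
    (hcont : ContinuousOn E (Ici t₀))
    (hnonneg : ∀ t ∈ Ici t₀, 0 ≤ E t)
    (hE0 : 0 < E t₀)
    (hlim : Tendsto E atTop (nhds 0))
    (hgronwall : ∀ t ≥ t₀,
      E t ≥ E t₀ * Real.exp (-2 * ∫ s in t₀..t, Real.sqrt (E s))) :
    ¬ ∃ α > (1 : ℝ), Tendsto (fun t => t ^ α * Real.sqrt (E t)) atTop (nhds 0) :=
  stmt_18_general t₀ E hcont hE0 hlim hgronwall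
end
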